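/- arXiv:2104.12384 — 4 statements merged into one kernel-verified Lean document; each statement's English description precedes it below -/
import Mathlib

section
/- Let $(z_n)$ be a sequence of nonnegative real numbers such that for constants $A \in (0,1)$, $B \geq 0$, $C \geq 0$ and all $n \geq 0$, $z_{n+1} \leq \sqrt{(1-A)^2 z_n^2 + B} + C$. Then for all $n \geq 0$, $z_n \leq (1-A)^n z_0 + \sqrt{B/A} + C/A$. -/
theorem stmt_0 (z : ℕ → ℝ) (hz : ∀ n, 0 ≤ z n)
    (A B C : ℝ) (hA : A ∈ Set.Ioo (0:ℝ) 1) (hB : 0 ≤ B) (hC : 0 ≤ C)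
    (hrec : ∀ n, z (n+1) ≤ Real.sqrt ((1-A)^2 * (z n)^2 + B) + C) :
    ∀ n, z n ≤ (1-A)^n * z 0 + Real.sqrt (B / A) + C / A := by
  obtain ⟨hA0, hA1⟩ := hA
  have h1A : 0 < 1 - A := by linarith
  have hsBA : Real.sqrt (B / A) * Real.sqrt (A * B) = B := by
    rw [← Real.sqrt_mul (by positivity),
      show B / A * (A * B) = B ^ 2 by field_simp]
    exact Real.sqrt_sq hB
  have hAsq : A * Real.sqrt (B / A) = Real.sqrt (A * B) := by
    nth_rewrite 1 [← Real.sqrt_sq hA0.le]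
    rw [← Real.sqrt_mul (by positivity)]
    congr 1
    field_simp
  have hCA : A * (C / A) = C := by field_simp
  intro n
  induction n with
  | zero =>
    simp only [pow_zero, one_mul]
    have := Real.sqrt_nonneg (B / A)
    have := div_nonneg hC hA0.le
    linarith
  | succ n ih =>
    set M := (1 - A) ^ n * z 0 + Real.sqrt (B / A) + C / A with hM
    clear_value M
    have h1 : 0 ≤ (1 - A) ^ n * z 0 := mul_nonneg (by positivity) (hz 0)
    have h2 : 0 ≤ C / A := div_nonneg hC hA0.le
    have h3 := Real.sqrt_nonneg (B / A)
    have hMnn : 0 ≤ M := by rw [hM]; linarith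
    have hBAM : Real.sqrt (B / A) ≤ M := by rw [hM]; linarith
    have step1 : Real.sqrt ((1 - A) ^ 2 * (z n) ^ 2 + B)
        ≤ Real.sqrt ((1 - A) ^ 2 * M ^ 2 + B) := by
      apply Real.sqrt_le_sqrt
      have hzz : (z n) ^ 2 ≤ M ^ 2 := by nlinarith [hz n, ih, hMnn]
      nlinarith [mul_le_mul_of_nonneg_left hzz (sq_nonneg (1 - A))]
    have step2 : Real.sqrt ((1 - A) ^ 2 * M ^ 2 + B)
        ≤ (1 - A) * M + Real.sqrt (A * B) := by
      have hsq : (1 - A) ^ 2 * M ^ 2 + B ≤ ((1 - A) * M + Real.sqrt (A * B)) ^ 2 := by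
        have hs1 : Real.sqrt (A * B) ^ 2 = A * B := Real.sq_sqrt (by positivity)
        have hs2 : Real.sqrt (B / A) * Real.sqrt (A * B) ≤ M * Real.sqrt (A * B) :=
          mul_le_mul_of_nonneg_right hBAM (Real.sqrt_nonneg _)
        have hMs : B ≤ M * Real.sqrt (A * B) := by linarith [hs2]
        nlinarith [mul_le_mul_of_nonneg_left hMs h1A.le, mul_nonneg h1A.le (hB.trans hMs),
          hs1, hB, hA0]
      calc Real.sqrt ((1 - A) ^ 2 * M ^ 2 + B)
          ≤ Real.sqrt (((1 - A) * M + Real.sqrt (A * B)) ^ 2) := Real.sqrt_le_sqrt hsq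
        _ = (1 - A) * M + Real.sqrt (A * B) := Real.sqrt_sq (by positivity)
    have key : (1 - A) * M + Real.sqrt (A * B) + C
        = (1 - A) ^ n * (1 - A) * z 0 + Real.sqrt (B / A) + C / A := by
      rw [hM]
      linear_combination (-1 : ℝ) * hAsq + (-1 : ℝ) * hCA
    have hpow : (1 - A) ^ (n + 1) = (1 - A) ^ n * (1 - A) := pow_succ _ _
    rw [hpow]
    linarith [step1, step2, hrec n, key.le]
end

section
/- Let $\widehat{A}, \widehat{B}, \widehat{C}$ be real matrices of sizes $\widehat{N} \times \widehat{N}$, $\widehat{N} \times 1$, $1 \times \widehat{N}$, let $\widehat{P}$ be $\widehat{N} \times \widehat{N}$ symmetric positive definite, and let $\mathcal{H}$ be a $d \times d$ real symmetric matrix with eigenvalues $H_1, \dots, H_d$. Set $A = \widehat{A} \otimes I_d$, $B = \widehat{B} \otimes I_d$, $C = \widehat{C} \otimes I_d$, $P = \widehat{P} \otimes I_d$, and for $\lambda \in \mathbb{R}$ define $\mathcal{T} = \lambda P + P(A + B(1 \otimes \mathcal{H})C) + (A + B(1 \otimes \mathcal{H})C)^T P$. Then the multiset of eigenvalues of $\mathcal{T}$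 is the union over $i = 1, \dots, d$ of the eigenvalue multisets of the $\widehat{N} \times \widehat{N}$ matrices $\lambda \widehat{P} + \widehat{P}(\widehat{A} + H_i \widehat{B}\widehat{C}) + (\widehat{A} + H_i \widehat{B}\widehat{C})^T \widehat{P}$. -/
open Matrix

open Polynomial in
theorem my_charpoly_conj {n R : Type*} [Fintype n] [DecidableEq n] [CommRing R]
    (U V S : Matrix n n R) (hUV : U * V = 1) :
    (U * S * V).charpoly = S.charpoly := by
  have hUV' : (U.map (C : R →+* R[X])) * (V.map C) = 1 := by
    rw [← Matrix.map_mul, hUV, Matrix.map_one _ (map_zero _) (map_one _)]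
  have key : charmatrix (U * S * V) = U.map C * charmatrix S * V.map C := by
    unfold charmatrix
    rw [mul_sub, sub_mul, RingHom.mapMatrix_apply, RingHom.mapMatrix_apply,
      ← Matrix.map_mul, ← Matrix.map_mul,
      ← (Matrix.scalar_commute (X : R[X]) (fun r' => Commute.all _ _) (U.map C)).eq,
      mul_assoc (Matrix.scalar n (X : R[X])), hUV', mul_one]
  have hdet : (U.map (C : R →+* R[X])).det * (V.map C).det = 1 := by
    rw [← det_mul, hUV', det_one]
  rw [Matrix.charpoly, Matrix.charpoly, key, det_mul, det_mul, mul_comm,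
    ← mul_assoc, mul_comm ((V.map C).det), hdet, one_mul]

theorem my_charpoly_blockDiagonal {m l R : Type*} [Fintype m] [DecidableEq m]
    [Fintype l] [DecidableEq l] [CommRing R] (f : l → Matrix m m R) :
    (blockDiagonal f).charpoly = ∏ i, (f i).charpoly := by
  simp only [Matrix.charpoly]
  rw [← det_blockDiagonal]
  congr 1
  ext ⟨a, i⟩ ⟨b, j⟩
  by_cases h : i = j
  · subst h
    by_cases h2 : a = b <;>
      simp [blockDiagonal_apply, charmatrix_apply, diagonal, h2, Prod.ext_iff]
  · simp [blockDiagonal_apply, charmatrix_apply, diagonal, h, Prod.ext_iff]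

open Polynomial in
open Kronecker in
theorem stmt_8 {Nh d : ℕ}
    (Ah : Matrix (Fin Nh) (Fin Nh) ℝ) (Bh : Matrix (Fin Nh) (Fin 1) ℝ)
    (Ch : Matrix (Fin 1) (Fin Nh) ℝ) (Ph : Matrix (Fin Nh) (Fin Nh) ℝ)
    (hPh : Ph.IsHermitian) (hPd : Ph.PosDef)
    (𝓗 : Matrix (Fin d) (Fin d) ℝ) (h𝓗 : 𝓗.IsHermitian) (lam : ℝ)
    (A : Matrix (Fin Nh × Fin d) (Fin Nh × Fin d) ℝ) (hA : A = Ah ⊗ₖ (1 : Matrix (Fin d) (Fin d) ℝ))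
    (B : Matrix (Fin Nh × Fin d) (Fin 1 × Fin d) ℝ) (hB : B = Bh ⊗ₖ (1 : Matrix (Fin d) (Fin d) ℝ))
    (C : Matrix (Fin 1 × Fin d) (Fin Nh × Fin d) ℝ) (hC : C = Ch ⊗ₖ (1 : Matrix (Fin d) (Fin d) ℝ))
    (P : Matrix (Fin Nh × Fin d) (Fin Nh × Fin d) ℝ) (hP : P = Ph ⊗ₖ (1 : Matrix (Fin d) (Fin d) ℝ))
    (𝓣 : Matrix (Fin Nh × Fin d) (Fin Nh × Fin d) ℝ)
    (h𝓣 : 𝓣 = lam • P + P * (A + B * ((1 : Matrix (Fin 1) (Fin 1) ℝ) ⊗ₖ 𝓗) * C)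
        + (A + B * ((1 : Matrix (Fin 1) (Fin 1) ℝ) ⊗ₖ 𝓗) * C)ᵀ * P) :
    𝓣.charpoly.roots =
      ∑ i : Fin d,
        (lam • Ph + Ph * (Ah + h𝓗.eigenvalues i • (Bh * Ch))
          + (Ah + h𝓗.eigenvalues i • (Bh * Ch))ᵀ * Ph).charpoly.roots := by
  set μ : Fin d → ℝ := h𝓗.eigenvalues with hμ
  set U : Matrix (Fin d) (Fin d) ℝ := (h𝓗.eigenvectorUnitary : Matrix (Fin d) (Fin d) ℝ) with hU
  set D : Matrix (Fin d) (Fin d) ℝ := diagonal μ with hD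
  have hU1 : U * star U = 1 := (Matrix.mem_unitaryGroup_iff).mp h𝓗.eigenvectorUnitary.2
  have hspec : 𝓗 = U * D * star U := by
    have := h𝓗.spectral_theorem
    rwa [RCLike.ofReal_real_eq_id, Function.id_comp] at this
  have hHT : 𝓗ᵀ = 𝓗 := by
    rw [← conjTranspose_eq_transpose_of_trivial]; exact h𝓗
  set M : Matrix (Fin Nh) (Fin Nh) ℝ := lam • Ph + Ph * Ah + Ahᵀ * Ph with hM
  set N : Matrix (Fin Nh) (Fin Nh) ℝ := Ph * (Bh * Ch) + (Bh * Ch)ᵀ * Ph with hN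
  set T : Fin d → Matrix (Fin Nh) (Fin Nh) ℝ := fun i =>
    lam • Ph + Ph * (Ah + μ i • (Bh * Ch)) + (Ah + μ i • (Bh * Ch))ᵀ * Ph with hTdef
  have hMN : ∀ i, M + μ i • N = T i := by
    intro i
    simp only [hM, hN, hTdef, mul_add, add_mul, transpose_add, transpose_smul, smul_add,
      mul_smul_comm, smul_mul_assoc, Matrix.mul_assoc]
    abel
  have e1 : B * ((1 : Matrix (Fin 1) (Fin 1) ℝ) ⊗ₖ 𝓗) * C = (Bh * Ch) ⊗ₖ 𝓗 := by
    rw [hB, hC, ← mul_kronecker_mul, ← mul_kronecker_mul]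
    simp only [Matrix.one_mul, Matrix.mul_one, one_mul, mul_one]
  have step1 : 𝓣 = M ⊗ₖ (1 : Matrix (Fin d) (Fin d) ℝ) + N ⊗ₖ 𝓗 := by
    rw [h𝓣, e1, hA, hP, hM, hN]
    rw [transpose_add, ← kroneckerMap_transpose, ← kroneckerMap_transpose, transpose_one, hHT,
      mul_add, add_mul, ← mul_kronecker_mul, ← mul_kronecker_mul, ← mul_kronecker_mul,
      ← mul_kronecker_mul, ← smul_kronecker, add_kronecker, add_kronecker, add_kronecker]
    simp only [Matrix.one_mul, Matrix.mul_one, one_mul, mul_one]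
    abel
  have step2 : 𝓣 = ((1 : Matrix (Fin Nh) (Fin Nh) ℝ) ⊗ₖ U)
      * (M ⊗ₖ (1 : Matrix (Fin d) (Fin d) ℝ) + N ⊗ₖ D)
      * ((1 : Matrix (Fin Nh) (Fin Nh) ℝ) ⊗ₖ star U) := by
    rw [step1, mul_add, add_mul, ← mul_kronecker_mul, ← mul_kronecker_mul,
      ← mul_kronecker_mul, ← mul_kronecker_mul]
    simp only [Matrix.one_mul, Matrix.mul_one, one_mul, mul_one]
    rw [hU1, ← hspec]
  have step3 : M ⊗ₖ (1 : Matrix (Fin d) (Fin d) ℝ) + N ⊗ₖ D = blockDiagonal T := by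
    ext ⟨a, i⟩ ⟨b, j⟩
    by_cases h : i = j
    · subst h
      rw [Matrix.add_apply, Matrix.blockDiagonal_apply_eq, ← hMN i]
      simp only [kroneckerMap_apply, hD, Matrix.one_apply_eq, Matrix.diagonal_apply_eq,
        Matrix.add_apply, Matrix.smul_apply, smul_eq_mul]
      ring
    · rw [Matrix.add_apply, Matrix.blockDiagonal_apply_ne _ _ _ h]
      simp only [kroneckerMap_apply, hD, Matrix.one_apply_ne h, Matrix.diagonal_apply_ne _ h,
        mul_zero, add_zero]
  have hconj : ((1 : Matrix (Fin Nh) (Fin Nh) ℝ) ⊗ₖ U)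
      * ((1 : Matrix (Fin Nh) (Fin Nh) ℝ) ⊗ₖ star U) = 1 := by
    rw [← mul_kronecker_mul, one_mul, hU1, one_kronecker_one]
  have hcp : 𝓣.charpoly = ∏ i, (T i).charpoly := by
    rw [step2, step3, my_charpoly_conj _ _ _ hconj, my_charpoly_blockDiagonal]
  have h0 : (∏ i, (T i).charpoly) ≠ 0 :=
    Finset.prod_ne_zero_iff.mpr fun i _ => (Matrix.charpoly_monic _).ne_zero
  rw [hcp, Polynomial.roots_prod _ _ h0, Finset.sum_eq_multiset_sum]
  rfl
end

section
/- Let $\widehat{L} = \begin{pmatrix} \ell_{11} & 0 \\ \ell_{21} & \ell_{22} \end{pmatrix}$ with $\ell_{11}, \ell_{22} > 0$, and consider $\widehat{Z} = -\widehat{P}(\widehat{A} + H\widehat{B}\widehat{C}) - (\widehat{A} + H\widehat{B}\widehat{C})^T\widehat{P}$ with $\widehat{P} = \widehat{L}\widehat{L}^T$, $\widehat{A} = \begin{pmatrix} -2 & 0 \\ 1 & 0 \end{pmatrix}$, $\widehat{B} = \begin{pmatrix} -c \\ 0 \end{pmatrix}$, $\widehat{C} = (0\ \ 1)$. Then the eigenvalues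 of $\widehat{L}^{-1}\widehat{Z}\widehat{L}^{-T}$ are $2 \pm \frac{\sqrt{(\ell_{11}^2 c H - 2\ell_{11}\ell_{21} + \ell_{21}^2 - \ell_{22}^2)^2 + 4\ell_{22}^2(\ell_{11} - \ell_{21})^2}}{\ell_{11}\ell_{22}}$. -/
/-!
With `K = A + H • (B * C)`, the matrix `M = L⁻¹ Z L⁻ᵀ` equals `-(N + Nᵀ)` for `N = Lᵀ K L⁻ᵀ`,
which is similar to `K`; hence `tr M = -2 tr K = 4`. Moreover `det M = det Z / (ℓ₁₁ ℓ₂₂)²`,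
and a direct computation gives `4 (ℓ₁₁ ℓ₂₂)² - det Z = E`, the radicand of the statement.
A `2 × 2` matrix with trace `2m` and `m² - det = s²` has characteristic polynomial
`(μ - m - s)(μ - m + s)`, so the eigenvalues are `2 ± √E / (ℓ₁₁ ℓ₂₂)`.
-/

open Matrix

theorem exists_mulVec_eq_smul_iff_det_sub_smul_eq_zero {n R : Type*} [Fintype n] [DecidableEq n]
    [CommRing R] [IsDomain R] (A : Matrix n n R) (μ : R) :
    (∃ v : n → R, v ≠ 0 ∧ A *ᵥ v = μ • v) ↔ (A - μ • 1).det = 0 := by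
  simp only [← exists_mulVec_eq_zero_iff, sub_mulVec, smul_mulVec, one_mulVec, sub_eq_zero,
    ne_eq]

theorem det_fin_two_sub_smul_one {R : Type*} [CommRing R] (A : Matrix (Fin 2) (Fin 2) R) (μ : R) :
    (A - μ • 1).det = μ ^ 2 - A.trace * μ + A.det := by
  rw [det_fin_two, det_fin_two, trace_fin_two]
  simp only [Matrix.sub_apply, Matrix.smul_apply, one_apply_eq, one_apply_ne zero_ne_one,
    one_apply_ne one_ne_zero, smul_eq_mul]
  ring

theorem exists_mulVec_eq_smul_fin_two_iff {R : Type*} [CommRing R] [IsDomain R]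
    (A : Matrix (Fin 2) (Fin 2) R) {m s μ : R} (htrace : A.trace = 2 * m)
    (hdisc : m ^ 2 - A.det = s ^ 2) :
    (∃ v : Fin 2 → R, v ≠ 0 ∧ A *ᵥ v = μ • v) ↔ μ = m + s ∨ μ = m - s := by
  have hfactor : (A - μ • 1).det = (μ - (m + s)) * (μ - (m - s)) := by
    rw [det_fin_two_sub_smul_one, htrace]
    linear_combination -hdisc
  rw [exists_mulVec_eq_smul_iff_det_sub_smul_eq_zero, hfactor, mul_eq_zero, sub_eq_zero,
    sub_eq_zero]

section Congruence

variable {n R : Type*} [Fintype n] [DecidableEq n] [CommRing R] {L : Matrix n n R}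

theorem trace_inv_mul_lyapunov_mul_inv_transpose (hL : IsUnit L.det) (K : Matrix n n R) :
    (L⁻¹ * (-(L * Lᵀ * K) - Kᵀ * (L * Lᵀ)) * Lᵀ⁻¹).trace = -2 * K.trace := by
  have hLt : IsUnit Lᵀ.det := isUnit_det_transpose L hL
  have hsim : (L⁻¹ * (L * Lᵀ * K) * Lᵀ⁻¹).trace = K.trace := by
    rw [mul_assoc L, nonsing_inv_mul_cancel_left _ _ hL, trace_mul_cycle, nonsing_inv_mul _ hLt,
      one_mul]
  have hsim' : (L⁻¹ * (Kᵀ * (L * Lᵀ)) * Lᵀ⁻¹).trace = K.trace := by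
    rw [← mul_assoc Kᵀ, mul_assoc, mul_assoc, mul_nonsing_inv _ hLt, mul_one, ← mul_assoc,
      trace_mul_cycle, mul_nonsing_inv _ hL, one_mul, trace_transpose]
  rw [mul_sub, sub_mul, trace_sub, mul_neg, neg_mul, trace_neg, hsim, hsim']
  ring

theorem det_sq_mul_det_inv_mul_mul_inv_transpose (hL : IsUnit L.det) (Z : Matrix n n R) :
    L.det ^ 2 * (L⁻¹ * Z * Lᵀ⁻¹).det = Z.det := by
  have hLt : IsUnit Lᵀ.det := isUnit_det_transpose L hL
  have hcongr : L * (L⁻¹ * Z * Lᵀ⁻¹) * Lᵀ = Z := by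
    rw [← mul_assoc, ← mul_assoc, mul_nonsing_inv _ hL, one_mul, mul_assoc,
      nonsing_inv_mul _ hLt, mul_one]
  conv_rhs => rw [← hcongr, det_mul, det_mul, det_transpose]
  ring

end Congruence

theorem stmt_12_general (c H l11 l21 l22 : ℝ) (h11 : 0 < l11) (h22 : 0 < l22)
    (Lh P A Z M : Matrix (Fin 2) (Fin 2) ℝ) (B : Matrix (Fin 2) (Fin 1) ℝ)
    (C : Matrix (Fin 1) (Fin 2) ℝ)
    (hL : Lh = !![l11, 0; l21, l22]) (hPdef : P = Lh * Lhᵀ)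
    (hA : A = !![-2, 0; 1, 0]) (hB : B = !![-c; (0:ℝ)]) (hC : C = !![(0:ℝ), 1])
    (hZ : Z = -(P * (A + H • (B * C))) - (A + H • (B * C))ᵀ * P)
    (hM : M = Lh⁻¹ * Z * (Lhᵀ)⁻¹) :
    ∀ μ : ℝ, (∃ v : Fin 2 → ℝ, v ≠ 0 ∧ M.mulVec v = μ • v) ↔
      μ = 2 + Real.sqrt ((l11^2 * c * H - 2*l11*l21 + l21^2 - l22^2)^2
            + 4*l22^2*(l11 - l21)^2) / (l11 * l22) ∨
      μ = 2 - Real.sqrt ((l11^2 * c * H - 2*l11*l21 + l21^2 - l22^2)^2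
            + 4*l22^2*(l11 - l21)^2) / (l11 * l22) := by
  intro μ
  set E := (l11^2 * c * H - 2*l11*l21 + l21^2 - l22^2)^2 + 4*l22^2*(l11 - l21)^2
  have hK : A + H • (B * C) = !![-2, -(c * H); 1, 0] := by
    rw [hA, hB, hC]
    ext i j
    fin_cases i <;> fin_cases j <;> simp [mul_comm]
  have hdetL : Lh.det = l11 * l22 := by simp [hL]
  have hLunit : IsUnit Lh.det := by rw [hdetL]; exact (mul_pos h11 h22).ne'.isUnit
  have hdetZ : Z.det = 4 * (l11 * l22) ^ 2 - E := by
    rw [hZ, hK, hPdef, hL, det_fin_two]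
    simp only [Matrix.sub_apply, Matrix.neg_apply, Matrix.mul_apply, Fin.sum_univ_two,
      transpose_apply, of_apply, cons_val', cons_val_zero, cons_val_one, cons_val_fin_one, E]
    ring
  have hdetM : (l11 * l22) ^ 2 * M.det = Z.det := by
    rw [hM, ← hdetL]
    exact det_sq_mul_det_inv_mul_mul_inv_transpose hLunit Z
  apply exists_mulVec_eq_smul_fin_two_iff
  · rw [hM, hZ, hPdef, trace_inv_mul_lyapunov_mul_inv_transpose hLunit, hK, trace_fin_two_of]
    norm_num
  · rw [div_pow, Real.sq_sqrt (by positivity)]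
    field_simp
    linear_combination -hdetM - hdetZ

theorem stmt_12 (c H l11 l21 l22 : ℝ) (hc : 0 < c) (h11 : 0 < l11) (h22 : 0 < l22)
    (Lh P A Z M : Matrix (Fin 2) (Fin 2) ℝ) (B : Matrix (Fin 2) (Fin 1) ℝ)
    (C : Matrix (Fin 1) (Fin 2) ℝ)
    (hL : Lh = !![l11, 0; l21, l22]) (hPdef : P = Lh * Lhᵀ)
    (hA : A = !![-2, 0; 1, 0]) (hB : B = !![-c; (0:ℝ)]) (hC : C = !![(0:ℝ), 1])
    (hZ : Z = -(P * (A + H • (B * C))) - (A + H • (B * C))ᵀ * P)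
    (hM : M = Lh⁻¹ * Z * (Lhᵀ)⁻¹) :
    ∀ μ : ℝ, (∃ v : Fin 2 → ℝ, v ≠ 0 ∧ M.mulVec v = μ • v) ↔
      μ = 2 + Real.sqrt ((l11^2 * c * H - 2*l11*l21 + l21^2 - l22^2)^2
            + 4*l22^2*(l11 - l21)^2) / (l11 * l22) ∨
      μ = 2 - Real.sqrt ((l11^2 * c * H - 2*l11*l21 + l21^2 - l22^2)^2
            + 4*l22^2*(l11 - l21)^2) / (l11 * l22) :=
  stmt_12_general c H l11 l21 l22 h11 h22 Lh P A Z M B C hL hPdef hA hB hC hZ hM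
end

section
/- Suppose $f : \mathbb{R}^d \to \mathbb{R}$ is $m$-strongly convex and $L$-smooth with $0 < m \leq L$, and let $\bar{x}$ be a random vector with density proportional to $\exp(-f(x))$. Then $\mathbb{E}(\|\nabla f(\bar{x})\|^2) \leq L d$. -/
/-!
Gaussian integration by parts: since `∂ᵥ e^{-f} = -(∂ᵥ f) e^{-f}`, for a unit vector `v`
`∫ (∂ᵥ f)² e^{-f} = ∫ (∂ᵥ² f) e^{-f} ≤ L ∫ e^{-f}`, because the Hessian is bounded by `L`.
Summing over an orthonormal basis gives `∫ ‖∇f‖² e^{-f} ≤ L d ∫ e^{-f}`. Strong convexity makes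
`e^{-f}` decay like a Gaussian, which beats the at most linear growth of `∇f` and justifies all
the integrations by parts.
-/

open MeasureTheory Real
open scoped Gradient RealInnerProductSpace

def HasGaussianDecay {E : Type*} [Norm E] (h : E → ℝ) : Prop :=
  ∃ C a b : ℝ, 0 < b ∧ ∀ x, |h x| ≤ C * exp (a * ‖x‖ - b * ‖x‖ ^ 2)

section GaussianDecay

variable {E : Type*} [NormedAddCommGroup E] {h u : E → ℝ}

theorem HasGaussianDecay.mul (hh : HasGaussianDecay h) {K c : ℝ}
    (hu : ∀ x, |u x| ≤ K * exp (c * ‖x‖)) : HasGaussianDecay fun x => u x * h x := by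
  obtain ⟨C, a, b, hb, hC⟩ := hh
  refine ⟨K * C, c + a, b, hb, fun x => ?_⟩
  calc |u x * h x| = |u x| * |h x| := abs_mul _ _
    _ ≤ K * exp (c * ‖x‖) * (C * exp (a * ‖x‖ - b * ‖x‖ ^ 2)) :=
      mul_le_mul (hu x) (hC x) (abs_nonneg _) ((abs_nonneg _).trans (hu x))
    _ = K * C * exp ((c + a) * ‖x‖ - b * ‖x‖ ^ 2) := by
      rw [mul_mul_mul_comm, ← exp_add]; ring_nf

theorem HasGaussianDecay.pow_mul (hh : HasGaussianDecay h) {K c : ℝ}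
    (hu : ∀ x, |u x| ≤ K * exp (c * ‖x‖)) (n : ℕ) :
    HasGaussianDecay fun x => u x ^ n * h x := by
  induction n with
  | zero => simpa using hh
  | succ n ih => simpa only [pow_succ', mul_assoc] using ih.mul hu

theorem hasGaussianDecay_exp_neg {f : E → ℝ} {a b c : ℝ} (hb : 0 < b)
    (hf : ∀ x, c - a * ‖x‖ + b * ‖x‖ ^ 2 ≤ f x) : HasGaussianDecay fun x => exp (-f x) :=
  ⟨exp (-c), a, b, hb, fun x => by
    rw [abs_of_pos (exp_pos _), ← exp_add, exp_le_exp]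
    linarith [hf x]⟩

variable [InnerProductSpace ℝ E] [FiniteDimensional ℝ E] [MeasurableSpace E] [BorelSpace E]

theorem integrable_exp_mul_norm_sub_mul_sq_norm (a : ℝ) {b : ℝ} (hb : 0 < b) :
    Integrable fun x : E => exp (a * ‖x‖ - b * ‖x‖ ^ 2) := by
  have hgauss : Integrable fun x : E => exp (-(b / 2) * ‖x‖ ^ 2) := by
    have := (GaussianFourier.integrable_cexp_neg_mul_sq_norm_add (V := E)
      (b := (b / 2 : ℂ)) (by simp [hb]) 0 0).norm
    refine this.congr (ae_of_all _ fun x => ?_)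
    simp only [inner_zero_left, Complex.ofReal_zero, mul_zero, add_zero, Complex.norm_exp]
    norm_cast
  refine (hgauss.const_mul (exp (a ^ 2 / (2 * b)))).mono' (by fun_prop)
    (ae_of_all _ fun x => ?_)
  rw [norm_of_nonneg (exp_pos _).le, ← exp_add, exp_le_exp]
  have : 0 ≤ (a - b * ‖x‖) ^ 2 / (2 * b) := by positivity
  have hsq : (a - b * ‖x‖) ^ 2 / (2 * b) =
      a ^ 2 / (2 * b) + -(b / 2) * ‖x‖ ^ 2 - (a * ‖x‖ - b * ‖x‖ ^ 2) := by
    field_simp; ring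
  linarith

theorem HasGaussianDecay.integrable (hh : HasGaussianDecay h) (hm : AEStronglyMeasurable h) :
    Integrable h := by
  obtain ⟨C, a, b, hb, hC⟩ := hh
  exact ((integrable_exp_mul_norm_sub_mul_sq_norm a hb).const_mul C).mono' hm
    (ae_of_all _ fun x => (norm_eq_abs (h x)).trans_le (hC x))

end GaussianDecay

section Calculus

variable {E : Type*} [NormedAddCommGroup E] [InnerProductSpace ℝ E] [CompleteSpace E]
  {f : E → ℝ} {L : ℝ}

theorem abs_fderiv_fderiv_apply_le (hL : 0 ≤ L)
    (hlip : ∀ x y, ‖∇ f x - ∇ f y‖ ≤ L * ‖x - y‖) (x v : E) :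
    |fderiv ℝ (fun y => fderiv ℝ f y v) x v| ≤ L * ‖v‖ ^ 2 := by
  have hnorm : ‖fderiv ℝ (fun y => fderiv ℝ f y v) x‖ ≤ L * ‖v‖ := by
    refine norm_fderiv_le_of_lip' ℝ (by positivity) (Filter.Eventually.of_forall fun y => ?_)
    rw [← inner_gradient_left, ← inner_gradient_left, ← inner_sub_left, norm_eq_abs]
    calc |⟪∇ f y - ∇ f x, v⟫| ≤ ‖∇ f y - ∇ f x‖ * ‖v‖ := abs_real_inner_le_norm _ _
      _ ≤ L * ‖y - x‖ * ‖v‖ := by gcongr; exact hlip y x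
      _ = L * ‖v‖ * ‖y - x‖ := by ring
  calc |fderiv ℝ (fun y => fderiv ℝ f y v) x v|
      ≤ ‖fderiv ℝ (fun y => fderiv ℝ f y v) x‖ * ‖v‖ :=
        (fderiv ℝ (fun y => fderiv ℝ f y v) x).le_opNorm v
    _ ≤ L * ‖v‖ * ‖v‖ := by gcongr
    _ = L * ‖v‖ ^ 2 := by ring

theorem abs_fderiv_apply_le_mul_exp (hL : 0 ≤ L)
    (hlip : ∀ x y, ‖∇ f x - ∇ f y‖ ≤ L * ‖x - y‖) (x v : E) :
    |fderiv ℝ f x v| ≤ (‖∇ f 0‖ + L) * ‖v‖ * exp ‖x‖ := by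
  have hgrad : ‖∇ f x‖ ≤ ‖∇ f 0‖ + L * ‖x‖ := by
    have := hlip x 0
    rw [sub_zero] at this
    linarith [norm_sub_norm_le (∇ f x) (∇ f 0)]
  have hexp : ‖∇ f 0‖ + L * ‖x‖ ≤ (‖∇ f 0‖ + L) * exp ‖x‖ := by
    have h1 : 1 ≤ exp ‖x‖ := one_le_exp (norm_nonneg x)
    have h2 : ‖x‖ ≤ exp ‖x‖ := by linarith [add_one_le_exp ‖x‖]
    nlinarith [norm_nonneg (∇ f 0)]
  rw [← inner_gradient_left]
  calc |⟪∇ f x, v⟫| ≤ ‖∇ f x‖ * ‖v‖ := abs_real_inner_le_norm _ _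
    _ ≤ (‖∇ f 0‖ + L) * exp ‖x‖ * ‖v‖ := by gcongr; exact hgrad.trans hexp
    _ = (‖∇ f 0‖ + L) * ‖v‖ * exp ‖x‖ := by ring

end Calculus

section IntegrationByParts

variable {E : Type*} [NormedAddCommGroup E] [InnerProductSpace ℝ E] [FiniteDimensional ℝ E]
  [MeasurableSpace E] [BorelSpace E] {μ : Measure E} [μ.IsAddHaarMeasure] {f : E → ℝ}

theorem integral_sq_fderiv_mul_exp_neg (hf : ContDiff ℝ 2 f) (v : E)
    (hi₁ : Integrable (fun x => fderiv ℝ (fun y => fderiv ℝ f y v) x v * exp (-f x)) μ)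
    (hi₂ : Integrable (fun x => fderiv ℝ f x v ^ 2 * exp (-f x)) μ)
    (hi₃ : Integrable (fun x => fderiv ℝ f x v * exp (-f x)) μ) :
    ∫ x, fderiv ℝ f x v ^ 2 * exp (-f x) ∂μ =
      ∫ x, fderiv ℝ (fun y => fderiv ℝ f y v) x v * exp (-f x) ∂μ := by
  have hdf : Differentiable ℝ f := hf.differentiable two_ne_zero
  have hdu : Differentiable ℝ fun y => fderiv ℝ f y v :=
    ((hf.fderiv_right le_rfl).clm_apply contDiff_const).differentiable one_ne_zero
  have hderiv : ∀ x, fderiv ℝ (fun y => exp (-f y)) x v = -(fderiv ℝ f x v * exp (-f x)) := by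
    intro x
    rw [((hdf x).hasFDerivAt.fun_neg.exp).fderiv]
    simp only [smul_apply, neg_apply, smul_eq_mul]
    ring
  have hibp := integral_mul_fderiv_eq_neg_fderiv_mul_of_integrable (μ := μ)
    (f := fun y => fderiv ℝ f y v) (g := fun y => exp (-f y)) (v := v) hi₁
    (by simpa only [hderiv, ← mul_assoc, ← sq, mul_neg] using hi₂.fun_neg) hi₃
    (fun x _ => hdu x) (fun x _ => ((hdf x).neg).exp)
  simp only [hderiv, ← mul_assoc, ← sq, mul_neg, integral_neg, neg_inj] at hibp
  exact hibp

end IntegrationByParts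

theorem integral_withDensity_ofReal_div {X : Type*} [MeasurableSpace X] {μ : Measure X}
    {g : X → ℝ} (hg : Measurable g) (hg₀ : ∀ x, 0 ≤ g x) {Z : ℝ} (hZ : 0 ≤ Z) (h : X → ℝ) :
    ∫ x, h x ∂μ.withDensity (fun x => ENNReal.ofReal (g x / Z)) = (∫ x, h x * g x ∂μ) / Z := by
  rw [integral_withDensity_eq_integral_toReal_smul (hg.div_const Z).ennreal_ofReal
    (ae_of_all _ fun _ => ENNReal.ofReal_lt_top), ← integral_div]
  refine integral_congr_ae (ae_of_all _ fun x => ?_)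
  simp only [ENNReal.toReal_ofReal (div_nonneg (hg₀ x) hZ), smul_eq_mul]
  ring

section GibbsMeasure

variable {E : Type*} [NormedAddCommGroup E] [InnerProductSpace ℝ E] [FiniteDimensional ℝ E]
  [MeasurableSpace E] [BorelSpace E] {f : E → ℝ} {L : ℝ}

theorem integrable_fderiv_pow_mul_exp_neg (hf : ContDiff ℝ 1 f) (hL : 0 ≤ L)
    (hlip : ∀ x y, ‖∇ f x - ∇ f y‖ ≤ L * ‖x - y‖) (hdecay : HasGaussianDecay fun x => exp (-f x))
    (v : E) (n : ℕ) : Integrable fun x => fderiv ℝ f x v ^ n * exp (-f x) := by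
  have hgrowth (x : E) : |fderiv ℝ f x v| ≤ (‖∇ f 0‖ + L) * ‖v‖ * exp (1 * ‖x‖) := by
    simpa using abs_fderiv_apply_le_mul_exp hL hlip x v
  have hfc := hf.continuous
  have hf'c := hf.continuous_fderiv one_ne_zero
  exact (hdecay.pow_mul hgrowth n).integrable (by fun_prop : Continuous _).aestronglyMeasurable

theorem integral_sq_fderiv_mul_exp_neg_le (hf : ContDiff ℝ 2 f) (hL : 0 ≤ L)
    (hlip : ∀ x y, ‖∇ f x - ∇ f y‖ ≤ L * ‖x - y‖) (hdecay : HasGaussianDecay fun x => exp (-f x))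
    (v : E) :
    ∫ x, fderiv ℝ f x v ^ 2 * exp (-f x) ≤ L * ‖v‖ ^ 2 * ∫ x, exp (-f x) := by
  have hintegrable := integrable_fderiv_pow_mul_exp_neg (hf.of_le one_le_two) hL hlip hdecay v
  have hg : Integrable fun x => exp (-f x) := by simpa using hintegrable 0
  have hhess : Integrable fun x => fderiv ℝ (fun y => fderiv ℝ f y v) x v * exp (-f x) := by
    refine (hdecay.mul (K := L * ‖v‖ ^ 2) (c := 0) fun x => ?_).integrable ?_
    · simpa using abs_fderiv_fderiv_apply_le hL hlip x v
    · have hu : ContDiff ℝ 1 fun y => fderiv ℝ f y v :=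
        (hf.fderiv_right le_rfl).clm_apply contDiff_const
      have hfc := hf.continuous
      have hu'c := hu.continuous_fderiv one_ne_zero
      exact (by fun_prop : Continuous _).aestronglyMeasurable
  rw [integral_sq_fderiv_mul_exp_neg hf v hhess (by simpa using hintegrable 2)
    (by simpa using hintegrable 1), ← integral_const_mul]
  refine integral_mono hhess (hg.const_mul _) fun x => ?_
  exact mul_le_mul_of_nonneg_right (abs_le.1 (abs_fderiv_fderiv_apply_le hL hlip x v)).2
    (exp_pos _).le

theorem integral_sq_norm_gradient_mul_exp_neg_le (hf : ContDiff ℝ 2 f) (hL : 0 ≤ L)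
    (hlip : ∀ x y, ‖∇ f x - ∇ f y‖ ≤ L * ‖x - y‖) (hdecay : HasGaussianDecay fun x => exp (-f x)) :
    ∫ x, ‖∇ f x‖ ^ 2 * exp (-f x) ≤ L * Module.finrank ℝ E * ∫ x, exp (-f x) := by
  let b := stdOrthonormalBasis ℝ E
  have hsum : ∀ x, ‖∇ f x‖ ^ 2 * exp (-f x) = ∑ i, fderiv ℝ f x (b i) ^ 2 * exp (-f x) := by
    intro x
    simp only [← b.sum_sq_inner_left (∇ f x), inner_gradient_left, Finset.sum_mul]
  calc ∫ x, ‖∇ f x‖ ^ 2 * exp (-f x)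
      = ∑ i, ∫ x, fderiv ℝ f x (b i) ^ 2 * exp (-f x) := by
        simp_rw [hsum]
        exact integral_finsetSum _ fun i _ =>
          integrable_fderiv_pow_mul_exp_neg (hf.of_le one_le_two) hL hlip hdecay (b i) 2
    _ ≤ ∑ _i, L * ∫ x, exp (-f x) := Finset.sum_le_sum fun i _ => by
        simpa [b.orthonormal.1 i] using integral_sq_fderiv_mul_exp_neg_le hf hL hlip hdecay (b i)
    _ = L * Module.finrank ℝ E * ∫ x, exp (-f x) := by
        simp only [Finset.sum_const, Finset.card_univ, Fintype.card_fin, nsmul_eq_mul]; ring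

end GibbsMeasure

theorem stmt_18 {d : ℕ} (f : EuclideanSpace ℝ (Fin d) → ℝ) (hf : ContDiff ℝ 2 f)
    (m L : ℝ) (hm : 0 < m) (hmL : m ≤ L)
    (hconv : ∀ x y, f x + (inner ℝ (gradient f x) (y - x) : ℝ) + m/2 * ‖x - y‖^2 ≤ f y)
    (hsmooth : ∀ x y, ‖gradient f x - gradient f y‖ ≤ L * ‖x - y‖)
    (Z : ℝ) (hZ : Z = ∫ x : EuclideanSpace ℝ (Fin d), Real.exp (-f x))
    (gibbs : Measure (EuclideanSpace ℝ (Fin d)))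
    (hgibbs : gibbs = volume.withDensity fun x => ENNReal.ofReal (Real.exp (-f x) / Z)) :
    ∫ x, ‖gradient f x‖^2 ∂gibbs ≤ L * d := by
  have hL : 0 ≤ L := hm.le.trans hmL
  have hdecay : HasGaussianDecay fun x => exp (-f x) := by
    refine hasGaussianDecay_exp_neg (c := f 0) (a := ‖∇ f 0‖) (half_pos hm) fun x => ?_
    have hinner := neg_le_of_abs_le (abs_real_inner_le_norm (∇ f 0) x)
    have := hconv 0 x
    simp only [sub_zero, zero_sub, norm_neg] at this
    linarith
  have hZ₀ : 0 ≤ Z := hZ ▸ integral_nonneg fun x => (exp_pos _).le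
  rw [hgibbs, integral_withDensity_ofReal_div (g := fun x => exp (-f x))
    (hf.continuous.neg.rexp).measurable (fun x => (exp_pos _).le) hZ₀]
  refine div_le_of_le_mul₀ hZ₀ (by positivity) ?_
  simpa [hZ] using integral_sq_norm_gradient_mul_exp_neg_le hf hL hsmooth hdecay
end
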